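/- First derivative of φ at the base pressure: let γ > 1, ρ_k > 0, p_k > 0 and μ² = (γ−1)/(γ+1), and let φ be the piecewise function φ(σ) = ρ_k·(σ/p_k)^(1/γ) for σ ≤ p_k and φ(σ) = ρ_k·(σ + μ²p_k)/(μ²σ + p_k) for σ > p_k. Then φ(p_k) = ρ_k and φ has derivative φ′(p_k) = ρ_k/(γ·p_k) = 1/c_k² at σ = p_k, where c_k = √(γp_k/ρ_k). -/

import Mathlib

/-- The density function `φ` of the Lax-curve parametrisation: isentropic rarefaction
branch for `σ ≤ p`, shock branch for `σ > p`, based at density `ρ` and pressure `p`. -/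
noncomputable def laxPhi (γ ρ p : ℝ) (σ : ℝ) : ℝ :=
  if σ ≤ p then
    ρ * (σ / p) ^ (1 / γ)
  else
    ρ * (σ + ((γ - 1) / (γ + 1)) * p) / (((γ - 1) / (γ + 1)) * σ + p)

/-! Both branches of `φ` pass through `ρ` at `σ = p`. The rarefaction branch has slope
`ρ / (γ p)` there and the shock branch has slope `ρ (1 - μ²) / ((1 + μ²) p)`; these agree
because `(1 - μ²) / (1 + μ²) = 1 / γ`. So the one-sided derivatives of `φ` coincide, and
`γ p / ρ = c²` turns their common value into `1 / c²`. -/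

theorem HasDerivAt.ite_le {E : Type*} [NormedAddCommGroup E] [NormedSpace ℝ E]
    {f g : ℝ → E} {f' : E} {x : ℝ} (hf : HasDerivAt f f' x) (hg : HasDerivAt g f' x)
    (hfg : f x = g x) : HasDerivAt (fun y => if y ≤ x then f y else g y) f' x := by
  have hleft : HasDerivWithinAt (fun y => if y ≤ x then f y else g y) f' (Set.Iic x) x :=
    hf.hasDerivWithinAt.congr (fun y hy => if_pos hy) (if_pos le_rfl)
  have hright : HasDerivWithinAt (fun y => if y ≤ x then f y else g y) f' (Set.Ici x) x := by
    refine hg.hasDerivWithinAt.congr (fun y hy => ?_) (by simp [hfg])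
    rcases (Set.mem_Ici.mp hy).eq_or_lt with rfl | hlt
    · simp [hfg]
    · exact if_neg hlt.not_ge
  simpa [Set.Iic_union_Ici] using hleft.union hright

theorem hasDerivAt_mul_div_rpow_self (ρ r : ℝ) {p : ℝ} (hp : p ≠ 0) :
    HasDerivAt (fun σ => ρ * (σ / p) ^ r) (ρ * r / p) p := by
  have h := (((hasDerivAt_id' p).div_const p).rpow_const (p := r)
    (Or.inl (by simp [hp]))).const_mul ρ
  refine h.congr_deriv ?_
  rw [div_self hp, Real.one_rpow]
  ring

theorem hasDerivAt_mul_add_div_mul_add_self (ρ a : ℝ) {p : ℝ} (ha : 1 + a ≠ 0) (hp : p ≠ 0) :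
    HasDerivAt (fun σ => ρ * (σ + a * p) / (a * σ + p)) (ρ * (1 - a) / ((1 + a) * p)) p := by
  have hden : a * p + p = (1 + a) * p := by ring
  have h := (((hasDerivAt_id' p).add_const (a * p)).const_mul ρ).div
    (((hasDerivAt_id' p).const_mul a).add_const p) (hden ▸ mul_ne_zero ha hp)
  refine h.congr_deriv ?_
  rw [hden, add_comm p, hden]
  field_simp

theorem laxPhi_self (γ ρ : ℝ) {p : ℝ} (hp : p ≠ 0) : laxPhi γ ρ p p = ρ := by
  simp [laxPhi, div_self hp]

/-- First derivative of `φ` at the base pressure: `φ(p_k) = ρ_k` and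
`φ′(p_k) = ρ_k/(γ·p_k) = 1/c_k²` with `c_k = √(γp_k/ρ_k)`. -/
theorem laxPhi_value_and_deriv_at_base
    (γ ρk pk ck : ℝ) (hγ : 1 < γ) (hρ : 0 < ρk) (hp : 0 < pk)
    (hck : ck = Real.sqrt (γ * pk / ρk)) :
    laxPhi γ ρk pk pk = ρk ∧
    HasDerivAt (laxPhi γ ρk pk) (ρk / (γ * pk)) pk ∧
    ρk / (γ * pk) = 1 / ck ^ 2 := by
  have hγ0 : 0 < γ := zero_lt_one.trans hγ
  set μsq := (γ - 1) / (γ + 1) with hμsq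
  have hrare := hasDerivAt_mul_div_rpow_self ρk (1 / γ) hp.ne'
  have hshock := hasDerivAt_mul_add_div_mul_add_self ρk μsq (by positivity) hp.ne'
  rw [show ρk * (1 / γ) / pk = ρk / (γ * pk) by field_simp] at hrare
  rw [show ρk * (1 - μsq) / ((1 + μsq) * pk) = ρk / (γ * pk) by
    rw [hμsq, div_eq_div_iff (by positivity) (by positivity)]
    field_simp
    ring] at hshock
  have hbranches : ρk * (pk / pk) ^ (1 / γ) = ρk * (pk + μsq * pk) / (μsq * pk + pk) := by
    rw [div_self hp.ne', Real.one_rpow, add_comm pk, mul_div_assoc, div_self (by positivity),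
      mul_one]
  refine ⟨laxPhi_self γ ρk hp.ne', hrare.ite_le hshock hbranches, ?_⟩
  rw [hck, Real.sq_sqrt (by positivity), one_div_div]
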